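/- Let E be a finite-dimensional real inner product space and let F : E → E be continuous and strongly monotone with modulus κ > 0, i.e., ⟨F(x) − F(y), x − y⟩ ≥ κ‖x − y‖² for all x, y ∈ E. Then F is a bijection of E onto E, and its inverse F⁻¹ is Lipschitz with constant 1/κ: for all u, v ∈ E, ‖F⁻¹(u) − F⁻¹(v)‖ ≤ (1/κ)‖u − v‖. -/

import Mathlib

/-!
In dimension one a continuous strongly monotone map `g : ℝ → ℝ` grows at least linearly in both
directions, so it is onto by the intermediate value theorem. In general, fix a unit vector `e` and
`H = (ℝ ∙ e)ᗮ`. For each `h ∈ H` the map `t ↦ ⟪F (t • e + h), e⟫` is strongly monotone on `ℝ`, so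
`⟪F (τ h • e + h), e⟫ = ⟪u, e⟫` has a solution `τ h`, which depends continuously on `h` because
strong monotonicity bounds `|τ h - τ h'|` by a residual. The compressed map
`h ↦ proj_H (F (τ h • e + h))` is again strongly monotone, on a space of one dimension less, so
induction on the dimension finds `h` with `F (τ h • e + h) = u`. Strong monotonicity also gives
`κ ‖x - y‖ ≤ ‖F x - F y‖`, i.e. injectivity and the Lipschitz bound for the inverse.
-/

open scoped RealInnerProductSpace
open Filter Function Module Submodule Topology

section

variable {E : Type*} [NormedAddCommGroup E] [InnerProductSpace ℝ E]

theorem eq_of_inner_eq_of_orthogonalProjectionOnto_eq {e x y : E} (hxy : ⟪x, e⟫ = ⟪y, e⟫)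
    (hproj : (ℝ ∙ e)ᗮ.orthogonalProjectionOnto x = (ℝ ∙ e)ᗮ.orthogonalProjectionOnto y) :
    x = y := by
  rw [← sub_eq_zero]
  have hmem : x - y ∈ (ℝ ∙ e)ᗮ := by
    rw [mem_orthogonal_singleton_iff_inner_right, real_inner_comm, inner_sub_left, hxy, sub_self]
  have hmem' : x - y ∈ (ℝ ∙ e)ᗮᗮ := by
    rw [← orthogonalProjectionOnto_eq_zero_iff, map_sub, hproj, sub_self]
  exact disjoint_def.mp (orthogonal_disjoint _) _ hmem hmem'

def StronglyMonotoneWith (κ : ℝ) (F : E → E) : Prop :=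
  ∀ x y, κ * ‖x - y‖ ^ 2 ≤ ⟪F x - F y, x - y⟫

namespace StronglyMonotoneWith

variable {κ : ℝ} {F : E → E}

theorem mul_norm_sub_le (hF : StronglyMonotoneWith κ F) (x y : E) :
    κ * ‖x - y‖ ≤ ‖F x - F y‖ := by
  rcases (norm_nonneg (x - y)).eq_or_lt with h | h
  · rw [← h, mul_zero]
    exact norm_nonneg _
  · refine le_of_mul_le_mul_right ?_ h
    calc κ * ‖x - y‖ * ‖x - y‖ = κ * ‖x - y‖ ^ 2 := by ring
      _ ≤ ⟪F x - F y, x - y⟫ := hF x y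
      _ ≤ ‖F x - F y‖ * ‖x - y‖ := real_inner_le_norm _ _

theorem norm_sub_le_div (hF : StronglyMonotoneWith κ F) (hκ : 0 < κ) (x y : E) :
    ‖x - y‖ ≤ ‖F x - F y‖ / κ :=
  (le_div_iff₀' hκ).mpr (hF.mul_norm_sub_le x y)

theorem injective (hF : StronglyMonotoneWith κ F) (hκ : 0 < κ) : Injective F := fun x y hxy => by
  simpa [hxy, sub_eq_zero] using hF.norm_sub_le_div hκ x y

theorem mul_sub_le_sub_of_le {g : ℝ → ℝ} (hg : StronglyMonotoneWith κ g) {s t : ℝ}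
    (hst : s ≤ t) : κ * (t - s) ≤ g t - g s := by
  rcases hst.eq_or_lt with rfl | hst
  · simp
  · have h := hg t s
    rw [Real.norm_eq_abs, sq_abs, Real.inner_apply] at h
    exact le_of_mul_le_mul_right (by linarith) (sub_pos.mpr hst)

theorem real_surjective {g : ℝ → ℝ} (hg : StronglyMonotoneWith κ g) (hgc : Continuous g)
    (hκ : 0 < κ) : Surjective g := by
  refine hgc.surjective ?_ ?_
  · refine tendsto_atTop_mono' _ ?_ (tendsto_atTop_add_const_left _ (g 0)
      (tendsto_id.const_mul_atTop hκ))
    filter_upwards [eventually_ge_atTop 0] with t ht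
    have := hg.mul_sub_le_sub_of_le ht
    simp only [id, sub_zero] at this ⊢
    linarith
  · refine tendsto_atBot_mono' _ ?_ (tendsto_atBot_add_const_left _ (g 0)
      (tendsto_id.const_mul_atBot hκ))
    filter_upwards [eventually_le_atBot 0] with t ht
    have := hg.mul_sub_le_sub_of_le ht
    simp only [id, zero_sub, mul_neg] at this ⊢
    linarith

theorem inner_line (hF : StronglyMonotoneWith κ F) {e : E} (he : ‖e‖ = 1) (p : E) :
    StronglyMonotoneWith κ fun t : ℝ => ⟪F (t • e + p), e⟫ := by
  intro t s
  have h := hF (t • e + p) (s • e + p)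
  rw [add_sub_add_right_eq_sub, ← sub_smul, norm_smul, he, mul_one, real_inner_smul_right,
    inner_sub_left] at h
  dsimp only
  rw [Real.inner_apply]
  linarith

theorem orthogonalProjectionOnto_comp (hF : StronglyMonotoneWith κ F) (hκ : 0 ≤ κ)
    (K : Submodule ℝ E) [K.HasOrthogonalProjection] {ψ : K → E}
    (hψ : ∀ a b, ψ a - ψ b - ↑(a - b) ∈ Kᗮ)
    (hFψ : ∀ a b, ⟪F (ψ a) - F (ψ b), ψ a - ψ b - ↑(a - b)⟫ = 0) :
    StronglyMonotoneWith κ fun k => K.orthogonalProjectionOnto (F (ψ k)) := by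
  intro a b
  have hnorm : ‖a - b‖ ^ 2 ≤ ‖ψ a - ψ b‖ ^ 2 := by
    rw [← add_sub_cancel ((a - b : K) : E) (ψ a - ψ b), norm_add_sq_real,
      inner_right_of_mem_orthogonal (a - b).2 (hψ a b), coe_norm]
    linarith [sq_nonneg ‖ψ a - ψ b - ↑(a - b)‖]
  calc κ * ‖a - b‖ ^ 2 ≤ κ * ‖ψ a - ψ b‖ ^ 2 := mul_le_mul_of_nonneg_left hnorm hκ
    _ ≤ ⟪F (ψ a) - F (ψ b), ψ a - ψ b⟫ := hF _ _
    _ = ⟪F (ψ a) - F (ψ b), ↑(a - b)⟫ := by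
      rw [← sub_eq_zero, ← inner_sub_right, hFψ]
    _ = _ := by
      rw [← map_sub, inner_orthogonalProjectionOnto_eq_of_mem_right]

theorem continuous_of_apply_eq {X : Type*} [TopologicalSpace X]
    {G : X → E → E} (hG : ∀ x, StronglyMonotoneWith κ (G x)) (hκ : 0 < κ)
    (hGc : ∀ p, Continuous fun x => G x p) {τ : X → E} {c : E} (hτ : ∀ x, G x (τ x) = c) :
    Continuous τ := by
  refine continuous_iff_continuousAt.mpr fun x => tendsto_iff_norm_sub_tendsto_zero.mpr ?_
  have hres : Tendsto (fun y => ‖G y (τ x) - G x (τ x)‖ / κ) (𝓝 x) (𝓝 0) := by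
    simpa using (tendsto_iff_norm_sub_tendsto_zero.mp ((hGc (τ x)).tendsto x)).div_const κ
  refine squeeze_zero (fun _ => norm_nonneg _) (fun y => ?_) hres
  calc ‖τ y - τ x‖ ≤ ‖G y (τ y) - G y (τ x)‖ / κ := (hG y).norm_sub_le_div hκ _ _
    _ = ‖G y (τ x) - G x (τ x)‖ / κ := by rw [hτ, ← hτ x, norm_sub_rev]

theorem surjective_of_orthogonal_singleton (hF : StronglyMonotoneWith κ F) (hFc : Continuous F)
    (hκ : 0 < κ) {e : E} (he : ‖e‖ = 1)
    (hH : ∀ G : (ℝ ∙ e)ᗮ → (ℝ ∙ e)ᗮ, Continuous G → StronglyMonotoneWith κ G → Surjective G) :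
    Surjective F := by
  intro u
  set H := (ℝ ∙ e)ᗮ
  have hline (h : H) := hF.inner_line he h
  choose τ hτ using fun h : H => (hline h).real_surjective (by fun_prop) hκ ⟪u, e⟫
  beta_reduce at hτ
  have hτc : Continuous τ := continuous_of_apply_eq hline hκ (fun t => by fun_prop) hτ
  have hψ (a b : H) : (τ a • e + a) - (τ b • e + b) - ↑(a - b) = (τ a - τ b) • e := by
    rw [AddSubgroupClass.coe_sub, sub_smul]; abel
  have hG := hF.orthogonalProjectionOnto_comp hκ.le H (ψ := fun h => τ h • e + h)
    (fun a b => by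
      rw [hψ]
      exact smul_mem _ _ (le_orthogonal_orthogonal _ (mem_span_singleton_self e)))
    (fun a b => by
      rw [hψ, real_inner_smul_right, inner_sub_left, hτ, hτ, sub_self, mul_zero])
  obtain ⟨h, hh⟩ := hH _ (by fun_prop) hG (H.orthogonalProjectionOnto u)
  exact ⟨_, eq_of_inner_eq_of_orthogonalProjectionOnto_eq (hτ h) hh⟩

theorem surjective [FiniteDimensional ℝ E] (hF : StronglyMonotoneWith κ F) (hFc : Continuous F)
    (hκ : 0 < κ) : Surjective F := by
  obtain ⟨n, hn⟩ : ∃ n, finrank ℝ E = n := ⟨_, rfl⟩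
  induction n generalizing E with
  | zero =>
    have := finrank_zero_iff.mp hn
    exact fun u => ⟨u, Subsingleton.elim _ _⟩
  | succ n ih =>
    have := nontrivial_of_finrank_eq_succ hn
    obtain ⟨e, he⟩ := exists_norm_eq E zero_le_one
    have : Fact (finrank ℝ E = n + 1) := ⟨hn⟩
    exact hF.surjective_of_orthogonal_singleton hFc hκ he fun G hGc hG =>
      ih hG hGc (finrank_orthogonal_span_singleton (ne_zero_of_norm_ne_zero (he ▸ one_ne_zero)))

end StronglyMonotoneWith

end

/-- **Browder–Minty in finite dimensions.**
A continuous, strongly monotone map `F` (with modulus `κ > 0`) on a finite-dimensional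
real inner product space is a bijection whose inverse is Lipschitz with constant `1/κ`. -/
theorem browder_minty_finite_dim
    {E : Type*} [NormedAddCommGroup E] [InnerProductSpace ℝ E] [FiniteDimensional ℝ E]
    (F : E → E) (hF : Continuous F)
    (κ : ℝ) (hκ : 0 < κ)
    (hmono : ∀ x y : E, κ * ‖x - y‖ ^ 2 ≤ ⟪F x - F y, x - y⟫) :
    Function.Bijective F ∧
      ∀ u v : E, ‖Function.invFun F u - Function.invFun F v‖ ≤ (1 / κ) * ‖u - v‖ := by
  have hmono' : StronglyMonotoneWith κ F := hmono
  have hsurj := hmono'.surjective hF hκ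
  refine ⟨⟨hmono'.injective hκ, hsurj⟩, fun u v => ?_⟩
  calc ‖invFun F u - invFun F v‖ ≤ ‖F (invFun F u) - F (invFun F v)‖ / κ :=
        hmono'.norm_sub_le_div hκ _ _
    _ = (1 / κ) * ‖u - v‖ := by rw [invFun_eq (hsurj u), invFun_eq (hsurj v), one_div_mul_eq_div]
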